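/- Let ν be a valuation on K[x] and {a_ρ}_{ρ<λ} ⊂ K a pseudo-convergent sequence of transcendental type, without a limit in K, for which x is a limit. Then {x - a_ρ : ρ < λ} is a complete set of key polynomials for ν: each x - a_ρ is a key polynomial, and for every f ∈ K[x] there exists ρ < λ with ν_{x-a_ρ}(f) = ν(f). -/

import Mathlib

open Polynomial
open scoped Classical
noncomputable section

/-- `ν` is (the restriction to nonzero polynomials of) a valuation on `K[x]`,
nontrivial on `K`, with `ν(x) ≥ 0`.  Values are taken in a linearly ordered
field `Γ` (playing the role of the divisible hull of the value group). -/
structure IsVal {K : Type*} [Field K] {Γ : Type*} [Field Γ] [LinearOrder Γ] [IsStrictOrderedRing Γ]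
    (ν : Polynomial K → Γ) : Prop where
  map_mul : ∀ f g : Polynomial K, f ≠ 0 → g ≠ 0 → ν (f * g) = ν f + ν g
  map_add : ∀ f g : Polynomial K, f ≠ 0 → g ≠ 0 → f + g ≠ 0 →
    min (ν f) (ν g) ≤ ν (f + g)
  nontrivial : ∃ a : K, a ≠ 0 ∧ ν (C a) ≠ 0
  nonneg_x : 0 ≤ ν X

/-- `ε(f) = max_{b ≥ 1, ∂_b f ≠ 0} (ν(f) - ν(∂_b f))/b`, where `∂_b` is the
`b`-th formal (Hasse) derivative.  (Terms with `∂_b f = 0` correspond to the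
value `-∞` and are omitted from the maximum.) -/
noncomputable def eps {K : Type*} [Field K] {Γ : Type*} [Field Γ] [LinearOrder Γ] [IsStrictOrderedRing Γ]
    (ν : Polynomial K → Γ) (f : Polynomial K) : Γ :=
  if h : ((Finset.Icc 1 f.natDegree).filter
      fun b => Polynomial.hasseDeriv b f ≠ 0).Nonempty then
    ((Finset.Icc 1 f.natDegree).filter
      fun b => Polynomial.hasseDeriv b f ≠ 0).sup' h
      fun b => (ν f - ν (Polynomial.hasseDeriv b f)) / (b : Γ)
  else 0

/-- A monic (nonconstant) polynomial `Q` is a key polynomial for `ν` if every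
`f ∈ K[x]` with `ε(f) ≥ ε(Q)` satisfies `deg f ≥ deg Q`. -/
def IsKeyPol {K : Type*} [Field K] {Γ : Type*} [Field Γ] [LinearOrder Γ] [IsStrictOrderedRing Γ]
    (ν : Polynomial K → Γ) (Q : Polynomial K) : Prop :=
  Q.Monic ∧ 1 ≤ Q.natDegree ∧
    ∀ f : Polynomial K, 1 ≤ f.natDegree → eps ν Q ≤ eps ν f →
      Q.natDegree ≤ f.natDegree

/-- The `i`-th coefficient `f_i` of the `q`-standard expansion
`f = Σ f_i q^i` (each `f_i = 0` or `deg f_i < deg q`), for `q` monic. -/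
noncomputable def qCoeff {K : Type*} [Field K] (q f : Polynomial K) (i : ℕ) :
    Polynomial K :=
  (f /ₘ q ^ i) %ₘ q

/-- The `q`-truncation `ν_q(f) = min_i ν(f_i q^i)` of `ν`, the minimum taken
over the nonzero coefficients of the `q`-standard expansion of `f`. -/
noncomputable def truncVal {K : Type*} [Field K] {Γ : Type*}
    [Field Γ] [LinearOrder Γ] [IsStrictOrderedRing Γ] (ν : Polynomial K → Γ) (q f : Polynomial K) : Γ :=
  if h : ((Finset.range (f.natDegree + 1)).filter
      fun i => qCoeff q f i ≠ 0).Nonempty then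
    ((Finset.range (f.natDegree + 1)).filter
      fun i => qCoeff q f i ≠ 0).inf' h
      fun i => ν (qCoeff q f i * q ^ i)
  else 0

/-- `I(Q) = {b : (ν(Q) - ν(∂_b Q))/b = ε(Q)}`. -/
def Iset {K : Type*} [Field K] {Γ : Type*} [Field Γ] [LinearOrder Γ] [IsStrictOrderedRing Γ]
    (ν : Polynomial K → Γ) (Q : Polynomial K) : Set ℕ :=
  {b | 1 ≤ b ∧ Polynomial.hasseDeriv b Q ≠ 0 ∧
    (ν Q - ν (Polynomial.hasseDeriv b Q)) / (b : Γ) = eps ν Q}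

/-- `S_Q(f) = {i : ν(f_i Q^i) = ν_Q(f)}` (over nonzero coefficients). -/
def Sset {K : Type*} [Field K] {Γ : Type*} [Field Γ] [LinearOrder Γ] [IsStrictOrderedRing Γ]
    (ν : Polynomial K → Γ) (q f : Polynomial K) : Set ℕ :=
  {i | qCoeff q f i ≠ 0 ∧ ν (qCoeff q f i * q ^ i) = truncVal ν q f}


variable {K : Type*} [Field K] {Γ : Type*} [Field Γ] [LinearOrder Γ] [IsStrictOrderedRing Γ]
variable {Λ : Type*} [LinearOrder Λ] [Nonempty Λ] [NoMaxOrder Λ]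
  [WellFoundedLT Λ]

/-- `{a_ρ}` is a pseudo-convergent sequence for `ν`. -/
def IsPCS (ν : Polynomial K → Γ) (a : Λ → K) : Prop :=
  ∀ ρ σ τ : Λ, ρ < σ → σ < τ →
    ν (C (a σ) - C (a ρ)) < ν (C (a τ) - C (a σ))

/-- `x` is a limit of the pseudo-convergent sequence `{a_ρ}`:
`ν(x - a_ρ) = γ_ρ = ν(a_σ - a_ρ)` for all `σ > ρ`. -/
def XIsLimit (ν : Polynomial K → Γ) (a : Λ → K) : Prop :=
  ∀ ρ σ : Λ, ρ < σ → ν (X - C (a ρ)) = ν (C (a σ) - C (a ρ))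

/-- `{a_ρ}` fixes the value of `f`: `ν(f(a_σ))` is eventually constant
(and in particular `f(a_σ)` is eventually nonzero). -/
def FixesVal (ν : Polynomial K → Γ) (a : Λ → K) (f : Polynomial K) : Prop :=
  ∃ ρ₀ : Λ, ∀ σ : Λ, ρ₀ ≤ σ → f.eval (a σ) ≠ 0 ∧
    ν (C (f.eval (a σ))) = ν (C (f.eval (a ρ₀)))

/-- `{a_ρ}` has a limit in `K`. -/
def HasLimitInK (ν : Polynomial K → Γ) (a : Λ → K) : Prop :=
  ∃ c : K, ∀ ρ σ : Λ, ρ < σ → ν (C c - C (a ρ)) = ν (C (a σ) - C (a ρ))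

/-! The Taylor expansion of `f` at `a_σ` is its `(x - a_σ)`-standard expansion, with terms
`∂_i f(a_σ) (x - a_σ)^i`. Since the sequence fixes the value of every nonzero `∂_i f`, for large
`σ` these terms have values `β_i + i γ_σ` with constants `β_i`, where `γ_σ = ν(x - a_σ)` is strictly
increasing. Two such values coincide for at most one `σ`, so for large `σ` the terms have pairwise
distinct values and `ν(f)` is their minimum, which is `ν_{x - a_σ}(f)`. Degree-one monic polynomials
are key polynomials trivially. -/

namespace Polynomial

variable {R : Type*} [CommRing R]

lemma coeff_divByMonic_X_pow (p : R[X]) (i n : ℕ) : (p /ₘ X ^ i).coeff n = p.coeff (n + i) := by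
  nontriviality R
  have hlt : (p %ₘ X ^ i).degree < (n + i : ℕ) := by
    refine (degree_modByMonic_lt p (monic_X_pow i)).trans_le ?_
    rw [degree_X_pow]
    exact_mod_cast Nat.le_add_left i n
  conv_rhs => rw [← p.modByMonic_add_div (X ^ i)]
  rw [coeff_add, coeff_X_pow_mul, coeff_eq_zero_of_degree_lt hlt, zero_add]

lemma taylor_divByMonic_modByMonic (c : R) {p q : R[X]} (hq : q.Monic) :
    taylor c p /ₘ taylor c q = taylor c (p /ₘ q) ∧ taylor c p %ₘ taylor c q = taylor c (p %ₘ q) := by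
  nontriviality R
  refine div_modByMonic_unique _ _ (by rwa [Monic, leadingCoeff_taylor]) ⟨?_, ?_⟩
  · rw [← taylor_mul, ← map_add, modByMonic_add_div]
  · rw [degree_taylor, degree_taylor]
    exact degree_modByMonic_lt p hq

lemma taylor_X_sub_C (c : R) : taylor c (X - C c) = X := by
  simp [taylor_X, taylor_C]

end Polynomial

lemma qCoeff_X_sub_C (c : K) (f : K[X]) (i : ℕ) :
    qCoeff (X - C c) f i = C ((taylor c f).coeff i) := by
  apply taylor_injective c
  have hq := monic_X_sub_C c
  rw [qCoeff, taylor_C, ← (taylor_divByMonic_modByMonic c hq).2,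
    ← (taylor_divByMonic_modByMonic c (hq.pow i)).1, taylor_pow, taylor_X_sub_C, modByMonic_X,
    ← coeff_zero_eq_eval_zero, coeff_divByMonic_X_pow, zero_add]

lemma isKeyPol_of_natDegree_eq_one (ν : K[X] → Γ) {Q : K[X]} (hQ : Q.Monic) (hdeg : Q.natDegree = 1) :
    IsKeyPol ν Q :=
  ⟨hQ, hdeg.ge, fun _ hf _ => hdeg ▸ hf⟩

namespace IsVal

variable {ν : K[X] → Γ} (hν : IsVal ν)
include hν

lemma map_one : ν 1 = 0 := by
  simpa using hν.map_mul 1 1 one_ne_zero one_ne_zero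

lemma map_neg {f : K[X]} (hf : f ≠ 0) : ν (-f) = ν f := by
  have hsq : ν (-1 * -1) = ν (-1) + ν (-1) := hν.map_mul _ _ (by simp) (by simp)
  have h1 : ν (-1) = 0 := by rw [neg_one_mul, neg_neg, hν.map_one] at hsq; linarith
  simpa [h1] using hν.map_mul (-1) f (by simp) hf

lemma map_add_of_lt {f g : K[X]} (hf : f ≠ 0) (hg : g ≠ 0) (hlt : ν f < ν g) :
    f + g ≠ 0 ∧ ν (f + g) = ν f := by
  have hfg : f + g ≠ 0 := fun h => by
    rw [eq_neg_of_add_eq_zero_left h, hν.map_neg hg] at hlt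
    exact hlt.false
  refine ⟨hfg, le_antisymm ?_ (by simpa [hlt.le] using hν.map_add f g hf hg hfg)⟩
  by_contra! hgt
  -- `f = (f + g) + (-g)` would have value `> ν f`
  have := hν.map_add (f + g) (-g) hfg (neg_ne_zero.2 hg) (by simpa using hf)
  rw [add_neg_cancel_right, hν.map_neg hg] at this
  exact (lt_min hgt hlt).not_ge this

lemma map_pow {q : K[X]} (hq : q ≠ 0) (i : ℕ) : ν (q ^ i) = i * ν q := by
  induction i with
  | zero => simpa using hν.map_one
  | succ i ih =>
    rw [pow_succ, hν.map_mul _ _ (pow_ne_zero i hq) hq, ih]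
    push_cast
    ring

lemma map_C_mul_pow {c : K} {q : K[X]} (hc : c ≠ 0) (hq : q ≠ 0) (i : ℕ) :
    ν (C c * q ^ i) = ν (C c) + i * ν q := by
  rw [hν.map_mul _ _ (C_ne_zero.2 hc) (pow_ne_zero i hq), hν.map_pow hq]

lemma map_sum_of_injOn {ι : Type*} {s : Finset ι} (hs : s.Nonempty) {t : ι → K[X]}
    (ht : ∀ i ∈ s, t i ≠ 0) (hinj : Set.InjOn (fun i => ν (t i)) s) :
    ∑ i ∈ s, t i ≠ 0 ∧ ν (∑ i ∈ s, t i) = s.inf' hs fun i => ν (t i) := by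
  induction hs using Finset.Nonempty.cons_induction with
  | singleton i => simpa using ht i
  | cons i s hi hs ih =>
    simp only [Finset.coe_cons, Set.injOn_insert (Finset.mem_coe.not.2 hi)] at hinj
    obtain ⟨hsum, hval⟩ := ih (fun j hj => ht j (Finset.mem_cons_of_mem hj)) hinj.1
    obtain ⟨j, hj, hjmin⟩ := Finset.exists_mem_eq_inf' hs fun i => ν (t i)
    have hne : ν (t i) ≠ ν (∑ j ∈ s, t j) := by
      rw [hval, hjmin]
      exact fun h => hinj.2 ⟨j, hj, h.symm⟩
    rw [Finset.sum_cons, Finset.inf'_cons hs, ← hval]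
    rcases hne.lt_or_gt with hlt | hlt
    · simpa [hlt.le] using hν.map_add_of_lt (ht i (Finset.mem_cons_self i s)) hsum hlt
    · simpa [add_comm, hlt.le] using
        hν.map_add_of_lt hsum (ht i (Finset.mem_cons_self i s)) hlt

lemma truncVal_X_sub_C_eq_of_injOn {c : K} {f : K[X]} (hf : f ≠ 0)
    (hinj : Set.InjOn (fun i => ν (C ((taylor c f).coeff i) * (X - C c) ^ i))
      (taylor c f).support) :
    truncVal ν (X - C c) f = ν f := by
  have hsupp : ((Finset.range (f.natDegree + 1)).filter fun i => qCoeff (X - C c) f i ≠ 0) =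
      (taylor c f).support := by
    ext i
    simp only [Finset.mem_filter, Finset.mem_range, qCoeff_X_sub_C, ne_eq, C_eq_zero,
      mem_support_iff, and_iff_right_iff_imp, Nat.lt_succ_iff]
    exact fun hi => natDegree_taylor f c ▸ le_natDegree_of_ne_zero hi
  have hne : (taylor c f).support.Nonempty := by simpa [taylor_eq_zero] using hf
  have hterm : ∀ i ∈ (taylor c f).support, C ((taylor c f).coeff i) * (X - C c) ^ i ≠ 0 :=
    fun i hi => mul_ne_zero (C_ne_zero.2 (mem_support_iff.1 hi)) (pow_ne_zero _ (X_sub_C_ne_zero c))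
  conv_rhs => rw [← sum_taylor_eq f c, Polynomial.sum_def]
  rw [(hν.map_sum_of_injOn hne hterm hinj).2, truncVal, dif_pos (hsupp ▸ hne)]
  exact Finset.inf'_congr _ hsupp fun i _ => by rw [qCoeff_X_sub_C]

end IsVal

section PseudoConvergent

variable {ι : Type*} [LinearOrder ι] {ν : K[X] → Γ} {a : ι → K}

lemma eventually_injOn_taylor_terms [NoMaxOrder ι] (hν : IsVal ν) (hpcs : IsPCS ν a)
    (hlim : XIsLimit ν a) (htrans : ∀ f : K[X], f ≠ 0 → FixesVal ν a f) (f : K[X]) :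
    ∀ᶠ σ in Filter.atTop, Set.InjOn
      (fun i => ν (C ((taylor (a σ) f).coeff i) * (X - C (a σ)) ^ i)) (taylor (a σ) f).support := by
  have hfix : ∀ i, hasseDeriv i f ≠ 0 → ∃ β : Γ, ∀ᶠ σ in Filter.atTop,
      (hasseDeriv i f).eval (a σ) ≠ 0 ∧ ν (C ((hasseDeriv i f).eval (a σ))) = β := fun i hi =>
    let ⟨ρ₀, hρ₀⟩ := htrans _ hi
    ⟨_, (Filter.eventually_ge_atTop ρ₀).mono hρ₀⟩
  choose! β hβ using hfix
  have hγ : StrictMono fun σ => ν (X - C (a σ)) := fun ρ σ hρσ => by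
    obtain ⟨τ, hστ⟩ := exists_gt σ
    simpa only [hlim ρ σ hρσ, hlim σ τ hστ] using hpcs ρ σ τ hρσ hστ
  set D := (Finset.range (f.natDegree + 1)).filter fun i => hasseDeriv i f ≠ 0
  -- the values of `γ_σ` at which the `i`-th and `j`-th terms would have equal value
  set F : Finset Γ := D.offDiag.image fun p => (β p.2 - β p.1) / (p.1 - p.2)
  have hD : ∀ᶠ σ in Filter.atTop, ∀ i ∈ D,
      (hasseDeriv i f).eval (a σ) ≠ 0 ∧ ν (C ((hasseDeriv i f).eval (a σ))) = β i :=
    (Filter.eventually_all_finset D).2 fun i hi => hβ i (Finset.mem_filter.1 hi).2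
  have hF : ∀ᶠ σ in Filter.atTop, ν (X - C (a σ)) ∉ F :=
    (hγ.injective.tendsto_cofinite.eventually
      F.eventually_cofinite_notMem).filter_mono Filter.atTop_le_cofinite
  filter_upwards [hD, hF] with σ hσD hσF
  have hsupp : ∀ i ∈ (taylor (a σ) f).support, i ∈ D := fun i hi => by
    have hcoeff := mem_support_iff.1 hi
    refine Finset.mem_filter.2 ⟨Finset.mem_range_succ_iff.2 ?_, fun h => ?_⟩
    · exact natDegree_taylor f (a σ) ▸ le_natDegree_of_ne_zero hcoeff
    · simp [taylor_coeff, h] at hcoeff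
  have hval : ∀ i ∈ D, ν (C ((taylor (a σ) f).coeff i) * (X - C (a σ)) ^ i) =
      β i + i * ν (X - C (a σ)) := fun i hi => by
    rw [taylor_coeff, hν.map_C_mul_pow (hσD i hi).1 (X_sub_C_ne_zero _), (hσD i hi).2]
  intro i hi j hj hij
  by_contra hne
  refine hσF (Finset.mem_image.2 ⟨(i, j), Finset.mem_offDiag.2 ⟨hsupp i hi, hsupp j hj, hne⟩, ?_⟩)
  have hij' : β i + i * ν (X - C (a σ)) = β j + j * ν (X - C (a σ)) := by
    rw [← hval i (hsupp i hi), ← hval j (hsupp j hj)]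
    exact hij
  rw [div_eq_iff (sub_ne_zero.2 (Nat.cast_injective.ne hne))]
  linarith

end PseudoConvergent

theorem transcendental_complete_set_general (ν : Polynomial K → Γ) (hν : IsVal ν)
    (a : Λ → K) (hpcs : IsPCS ν a) (hlim : XIsLimit ν a)
    (htrans : ∀ f : Polynomial K, f ≠ 0 → FixesVal ν a f) :
    (∀ ρ : Λ, IsKeyPol ν (X - C (a ρ))) ∧
    (∀ f : Polynomial K, f ≠ 0 →
      ∃ ρ : Λ, truncVal ν (X - C (a ρ)) f = ν f) := by
  refine ⟨fun ρ => isKeyPol_of_natDegree_eq_one ν (monic_X_sub_C _) (natDegree_X_sub_C _),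
    fun f hf => ?_⟩
  obtain ⟨σ, hσ⟩ := (eventually_injOn_taylor_terms hν hpcs hlim htrans f).exists
  exact ⟨σ, hν.truncVal_X_sub_C_eq_of_injOn hf hσ⟩

/-- If `{a_ρ}` is a pseudo-convergent sequence of transcendental type,
without a limit in `K`, for which `x` is a limit, then
`{x - a_ρ}` is a complete set of key polynomials for `ν`. -/
theorem transcendental_complete_set (ν : Polynomial K → Γ) (hν : IsVal ν)
    (a : Λ → K) (hpcs : IsPCS ν a) (hlim : XIsLimit ν a)
    (hnolim : ¬ HasLimitInK ν a)
    (htrans : ∀ f : Polynomial K, f ≠ 0 → FixesVal ν a f) :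
    (∀ ρ : Λ, IsKeyPol ν (X - C (a ρ))) ∧
    (∀ f : Polynomial K, f ≠ 0 →
      ∃ ρ : Λ, truncVal ν (X - C (a ρ)) f = ν f) :=
  transcendental_complete_set_general ν hν a hpcs hlim htrans
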